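/- arXiv:2211.00707 — 3 statements merged into one kernel-verified Lean document; each statement's English description precedes it below -/
import Mathlib

section
/- Let v : 2^M → ℝ≥0 be an MPH-k function (maximum over a nonempty family of PH-k functions). Let μ be a probability distribution over subsets T of M satisfying P_μ[j ∈ T] ≤ β/(1+β) for all j ∈ M, where β > 0. Then for any S ⊆ M, ∑_T μ(T)·v(S \ T) ≥ (1 − kβ/(1+β))·v(S). -/
open Finset

theorem stmt_6 {ι : Type*} [Fintype ι] [DecidableEq ι]
    (μ : Finset ι → ℝ) (hμ0 : ∀ T, 0 ≤ μ T) (hμ1 : ∑ T : Finset ι, μ T = 1)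
    (k : ℕ) (hk : 0 < k) (β : ℝ) (hβ : 0 < β)
    (t : ℕ) (ht : 0 < t) (w : Fin t → Finset ι → ℝ)
    (hw0 : ∀ ℓ X, 0 ≤ w ℓ X) (hwk : ∀ (ℓ : Fin t) (X : Finset ι), k < X.card → w ℓ X = 0)
    (v : Finset ι → ℝ)
    (hvmax : ∀ S : Finset ι, ∃ ℓ : Fin t, v S = ∑ X ∈ S.powerset, w ℓ X)
    (hvub : ∀ (S : Finset ι) (ℓ : Fin t), (∑ X ∈ S.powerset, w ℓ X) ≤ v S)
    (h : ∀ j : ι, (∑ T : Finset ι, if j ∈ T then μ T else 0) ≤ β / (1 + β))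
    (S : Finset ι) :
    ∑ T : Finset ι, μ T * v (S \ T) ≥ (1 - k * β / (1 + β)) * v S := by
  obtain ⟨ℓ, hℓ⟩ := hvmax S
  have hβ1 : (0:ℝ) < 1 + β := by linarith
  set c : ℝ := β / (1 + β) with hc
  have hc0 : 0 ≤ c := by positivity
  have hkc : (k : ℝ) * β / (1 + β) = (k : ℝ) * c := by
    rw [hc, mul_div_assoc]
  -- rewrite (S \ T).powerset as a filter of S.powerset
  have hpow : ∀ T : Finset ι,
      (S \ T).powerset = S.powerset.filter (fun X => Disjoint X T) := by
    intro T
    ext X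
    simp [Finset.mem_powerset, Finset.subset_sdiff, Finset.mem_filter]
  -- probability of disjointness
  have hPdef : ∀ X : Finset ι,
      (∑ T : Finset ι, if Disjoint X T then μ T else 0)
        = 1 - ∑ T : Finset ι, if Disjoint X T then 0 else μ T := by
    intro X
    have : ∀ T : Finset ι, (if Disjoint X T then μ T else 0)
        = μ T - (if Disjoint X T then 0 else μ T) := by
      intro T; by_cases hd : Disjoint X T <;> simp [hd]
    rw [Finset.sum_congr rfl (fun T _ => this T), Finset.sum_sub_distrib, hμ1]
  -- union bound
  have hQ : ∀ X : Finset ι,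
      (∑ T : Finset ι, if Disjoint X T then 0 else μ T) ≤ (X.card : ℝ) * c := by
    intro X
    have hle : ∀ T : Finset ι, (if Disjoint X T then 0 else μ T)
        ≤ ∑ j ∈ X, (if j ∈ T then μ T else 0) := by
      intro T
      by_cases hd : Disjoint X T
      · simp only [hd, if_true]
        exact Finset.sum_nonneg fun j _ => by
          by_cases hj : j ∈ T <;> simp [hj, hμ0 T]
      · simp only [hd, if_false]
        obtain ⟨j, hjX, hjT⟩ := Finset.not_disjoint_iff.mp hd
        have := Finset.single_le_sum
          (f := fun j => if j ∈ T then μ T else 0)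
          (fun i _ => by by_cases hi : i ∈ T <;> simp [hi, hμ0 T]) hjX
        simpa [hjT] using this
    calc (∑ T : Finset ι, if Disjoint X T then 0 else μ T)
        ≤ ∑ T : Finset ι, ∑ j ∈ X, (if j ∈ T then μ T else 0) :=
          Finset.sum_le_sum fun T _ => hle T
      _ = ∑ j ∈ X, ∑ T : Finset ι, (if j ∈ T then μ T else 0) :=
          Finset.sum_comm
      _ ≤ ∑ j ∈ X, c := Finset.sum_le_sum fun j _ => h j
      _ = (X.card : ℝ) * c := by simp [mul_comm]
  -- per-X bound
  have hkey : ∀ X ∈ S.powerset,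
      (1 - (k:ℝ) * c) * w ℓ X
        ≤ w ℓ X * (∑ T : Finset ι, if Disjoint X T then μ T else 0) := by
    intro X _
    by_cases hwX : w ℓ X = 0
    · simp [hwX]
    · have hcard : X.card ≤ k := by
        by_contra hlt
        exact hwX (hwk ℓ X (lt_of_not_ge hlt))
      have hP : 1 - (k:ℝ) * c ≤ ∑ T : Finset ι, if Disjoint X T then μ T else 0 := by
        rw [hPdef X]
        have h1 : (∑ T : Finset ι, if Disjoint X T then 0 else μ T) ≤ (k:ℝ) * c := by
          refine le_trans (hQ X) (mul_le_mul_of_nonneg_right ?_ hc0)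
          exact_mod_cast hcard
        linarith
      rw [mul_comm (w ℓ X)]
      exact mul_le_mul_of_nonneg_right hP (hw0 ℓ X)
  -- main chain
  have hmain : (1 - (k:ℝ) * c) * v S ≤ ∑ T : Finset ι, μ T * v (S \ T) := by
    calc (1 - (k:ℝ) * c) * v S
        = ∑ X ∈ S.powerset, (1 - (k:ℝ) * c) * w ℓ X := by
          rw [hℓ, Finset.mul_sum]
      _ ≤ ∑ X ∈ S.powerset,
            w ℓ X * (∑ T : Finset ι, if Disjoint X T then μ T else 0) :=
          Finset.sum_le_sum hkey
      _ = ∑ X ∈ S.powerset, ∑ T : Finset ι,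
            (if Disjoint X T then μ T * w ℓ X else 0) := by
          refine Finset.sum_congr rfl fun X _ => ?_
          rw [Finset.mul_sum]
          refine Finset.sum_congr rfl fun T _ => ?_
          by_cases hd : Disjoint X T <;> simp [hd, mul_comm]
      _ = ∑ T : Finset ι, ∑ X ∈ S.powerset,
            (if Disjoint X T then μ T * w ℓ X else 0) := Finset.sum_comm
      _ = ∑ T : Finset ι, μ T * ∑ X ∈ (S \ T).powerset, w ℓ X := by
          refine Finset.sum_congr rfl fun T _ => ?_
          rw [hpow T, Finset.sum_filter, Finset.mul_sum]
          refine Finset.sum_congr rfl fun X _ => ?_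
          by_cases hd : Disjoint X T <;> simp [hd]
      _ ≤ ∑ T : Finset ι, μ T * v (S \ T) :=
          Finset.sum_le_sum fun T _ =>
            mul_le_mul_of_nonneg_left (hvub (S \ T) ℓ) (hμ0 T)
  rw [ge_iff_le, hkc]
  exact hmain
end

section
/- Let μ be a probability distribution over subsets of a finite set M with P_μ[j ∈ T] ≤ 1/2 for all j ∈ M (i.e., the dual constraint with β = 1). Then for every XOS function v and every S ⊆ M, ∑_T μ(T)·v(S \ T) − (1/2)·v(S) ≥ 0; hence for α = 2 and β = 1, the dual objective ∑_i ∑_S λ_{i,S}·(β·∑_T μ(T)·v_i(S \ T) − (1/α)·v_i(S)) is nonnegative for any nonnegative weights λ_{i,S} and XOS functions v_i. -/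
open Finset

/-- `v` is an XOS function: the pointwise maximum of finitely many
nonnegative additive set functions. -/
def IsXOS {ι : Type*} [DecidableEq ι] (v : Finset ι → ℝ) : Prop :=
  ∃ t : ℕ, 0 < t ∧ ∃ c : Fin t → ι → ℝ,
    (∀ i j, 0 ≤ c i j) ∧
    (∀ S : Finset ι, ∃ i : Fin t, v S = ∑ j ∈ S, c i j) ∧
    (∀ (S : Finset ι) (i : Fin t), (∑ j ∈ S, c i j) ≤ v S)

theorem stmt_13 {ι : Type*} [Fintype ι] [DecidableEq ι]
    (μ : Finset ι → ℝ) (hμ0 : ∀ T, 0 ≤ μ T) (hμ1 : ∑ T : Finset ι, μ T = 1)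
    (h : ∀ j : ι, (∑ T : Finset ι, if j ∈ T then μ T else 0) ≤ 1 / 2) :
    (∀ v : Finset ι → ℝ, IsXOS v → ∀ S : Finset ι,
      (∑ T : Finset ι, μ T * v (S \ T)) - (1 / 2) * v S ≥ 0) ∧
    (∀ (n : ℕ) (vi : Fin n → Finset ι → ℝ) (lam : Fin n → Finset ι → ℝ),
      (∀ i, IsXOS (vi i)) → (∀ i S, 0 ≤ lam i S) →
      0 ≤ ∑ i : Fin n, ∑ S : Finset ι,
          lam i S * (1 * (∑ T : Finset ι, μ T * vi i (S \ T)) - (1 / 2) * vi i S)) := by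
  have main : ∀ v : Finset ι → ℝ, IsXOS v → ∀ S : Finset ι,
      (∑ T : Finset ι, μ T * v (S \ T)) - (1 / 2) * v S ≥ 0 := by
    intro v hv S
    obtain ⟨t, ht, c, hc0, hmax, hle⟩ := hv
    obtain ⟨i, hi⟩ := hmax S
    have key : (∑ T : Finset ι, μ T * (∑ j ∈ S \ T, c i j))
        ≤ ∑ T : Finset ι, μ T * v (S \ T) :=
      Finset.sum_le_sum fun T _ =>
        mul_le_mul_of_nonneg_left (hle (S \ T) i) (hμ0 T)
    have swap : (∑ T : Finset ι, μ T * (∑ j ∈ S \ T, c i j))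
        = ∑ j ∈ S, c i j * (1 - ∑ T : Finset ι, if j ∈ T then μ T else 0) := by
      have h1 : ∀ T : Finset ι, μ T * (∑ j ∈ S \ T, c i j)
          = ∑ j ∈ S, (if j ∈ T then 0 else μ T * c i j) := by
        intro T
        rw [Finset.mul_sum, Finset.sdiff_eq_filter,
          Finset.sum_filter]
        apply Finset.sum_congr rfl
        intro j _
        by_cases hj : j ∈ T <;> simp [hj]
      simp_rw [h1]
      rw [Finset.sum_comm]
      apply Finset.sum_congr rfl
      intro j _
      have : (∑ T : Finset ι, if j ∈ T then (0:ℝ) else μ T * c i j)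
          = ∑ T : Finset ι, (μ T * c i j - if j ∈ T then μ T * c i j else 0) := by
        apply Finset.sum_congr rfl
        intro T _
        by_cases hj : j ∈ T <;> simp [hj]
      rw [this, Finset.sum_sub_distrib, ← Finset.sum_mul, hμ1]
      have : (∑ T : Finset ι, if j ∈ T then μ T * c i j else 0)
          = (∑ T : Finset ι, if j ∈ T then μ T else 0) * c i j := by
        rw [Finset.sum_mul]
        apply Finset.sum_congr rfl
        intro T _
        by_cases hj : j ∈ T <;> simp [hj]
      rw [this]; ring
    have lower : v S / 2 ≤ ∑ j ∈ S, c i j * (1 - ∑ T : Finset ι, if j ∈ T then μ T else 0) := by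
      rw [hi, Finset.sum_div, ← Finset.sum_div]
      rw [Finset.sum_div]
      apply Finset.sum_le_sum
      intro j _
      have hj := h j
      have := hc0 i j
      nlinarith
    rw [ge_iff_le, sub_nonneg]
    calc (1/2) * v S = v S / 2 := by ring
      _ ≤ _ := lower
      _ = ∑ T : Finset ι, μ T * (∑ j ∈ S \ T, c i j) := swap.symm
      _ ≤ _ := key
  refine ⟨main, ?_⟩
  intro n vi lam hXOS hlam
  apply Finset.sum_nonneg
  intro i _
  apply Finset.sum_nonneg
  intro S _
  apply mul_nonneg (hlam i S)
  have := main (vi i) (hXOS i) S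
  linarith
end

section
/- Let k ≥ 2 be an integer and β = 1/(2(k−1)). Let μ be a probability distribution over subsets of a finite set M with P_μ[j ∈ T] ≤ β/(1+β) for all j. Then for every MPH-k function v and every S ⊆ M, β·∑_T μ(T)·v(S \ T) ≥ (1/(4k−2))·v(S). -/
open Finset

/-- `v` is an MPH-`k` function: the pointwise maximum of finitely many PH-`k`
functions, i.e. functions of the form `S ↦ ∑ X ⊆ S, w X` with `w ≥ 0`
supported on sets of cardinality at most `k`. -/
def IsMPH {ι : Type*} [DecidableEq ι] (k : ℕ) (v : Finset ι → ℝ) : Prop :=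
  ∃ t : ℕ, 0 < t ∧ ∃ w : Fin t → Finset ι → ℝ,
    (∀ ℓ X, 0 ≤ w ℓ X) ∧
    (∀ (ℓ : Fin t) (X : Finset ι), k < X.card → w ℓ X = 0) ∧
    (∀ S : Finset ι, ∃ ℓ : Fin t, v S = ∑ X ∈ S.powerset, w ℓ X) ∧
    (∀ (S : Finset ι) (ℓ : Fin t), (∑ X ∈ S.powerset, w ℓ X) ≤ v S)

/-!
Write `p = β/(1+β) = 1/(2k-1)` for the bound on the marginals. A set `X` with `|X| ≤ k`
survives the removal of a random `T ∼ μ` (i.e. `X ∩ T = ∅`) with probability at least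
`1 - k p = (k-1)/(2k-1)`, by the union bound. Hence for a PH-`k` function
`S ↦ ∑_{X ⊆ S} w X`, each term `w X` with `X ⊆ S` is kept in expectation up to that factor.
For an MPH-`k` function `v`, pick the PH-`k` summand attaining `v S`; it stays below `v`
on every `S \ T`, so `E[v(S \ T)] ≥ (k-1)/(2k-1) · v S`, and `β (k-1)/(2k-1) = 1/(4k-2)`.
-/

section

variable {ι : Type*} [Fintype ι] [DecidableEq ι] (μ : Finset ι → ℝ)

theorem sum_not_disjoint_le_sum_sum_mem (hμ0 : ∀ T, 0 ≤ μ T) (X : Finset ι) :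
    ∑ T, (if ¬Disjoint X T then μ T else 0) ≤ ∑ j ∈ X, ∑ T, if j ∈ T then μ T else 0 := by
  rw [Finset.sum_comm]
  refine Finset.sum_le_sum fun T _ => ?_
  rw [Finset.sum_ite_mem, Finset.sum_const, nsmul_eq_mul]
  split_ifs with hXT
  · exact mul_nonneg (Nat.cast_nonneg _) (hμ0 T)
  · have : (1 : ℝ) ≤ (X ∩ T).card := by
      exact_mod_cast Finset.card_pos.mpr (Finset.not_disjoint_iff_nonempty_inter.mp hXT)
    nlinarith [hμ0 T]

theorem one_sub_card_mul_le_sum_disjoint (hμ0 : ∀ T, 0 ≤ μ T) (hμ1 : ∑ T, μ T = 1) {p : ℝ}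
    (hp : ∀ j, ∑ T, (if j ∈ T then μ T else 0) ≤ p) (X : Finset ι) :
    1 - X.card * p ≤ ∑ T, if Disjoint X T then μ T else 0 := by
  have hsplit : (∑ T, if Disjoint X T then μ T else 0) +
      ∑ T, (if ¬Disjoint X T then μ T else 0) = 1 := by
    rw [← Finset.sum_add_distrib, ← hμ1]
    exact Finset.sum_congr rfl fun T _ => by split_ifs <;> simp
  have hunion : ∑ j ∈ X, ∑ T, (if j ∈ T then μ T else 0) ≤ X.card * p := by
    simpa using Finset.sum_le_sum fun j (_ : j ∈ X) => hp j
  linarith [sum_not_disjoint_le_sum_sum_mem μ hμ0 X]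

theorem sum_mul_sum_powerset_sdiff (w : Finset ι → ℝ) (S : Finset ι) :
    ∑ T, μ T * ∑ X ∈ (S \ T).powerset, w X =
      ∑ X ∈ S.powerset, w X * ∑ T, if Disjoint X T then μ T else 0 := by
  simp_rw [Finset.mul_sum, mul_ite, mul_zero]
  rw [Finset.sum_comm]
  refine Finset.sum_congr rfl fun T _ => ?_
  have hpow : (S \ T).powerset = S.powerset.filter (Disjoint · T) := by
    ext X
    simp [Finset.subset_sdiff]
  rw [hpow, Finset.sum_filter]
  exact Finset.sum_congr rfl fun X _ => by split_ifs <;> ring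

theorem mul_sum_powerset_le_sum_mul_sum_powerset_sdiff (hμ0 : ∀ T, 0 ≤ μ T)
    (hμ1 : ∑ T, μ T = 1) {p : ℝ} (hp0 : 0 ≤ p)
    (hp : ∀ j, ∑ T, (if j ∈ T then μ T else 0) ≤ p) {k : ℕ} (w : Finset ι → ℝ)
    (hw0 : ∀ X, 0 ≤ w X) (hwk : ∀ X : Finset ι, k < X.card → w X = 0) (S : Finset ι) :
    (1 - k * p) * ∑ X ∈ S.powerset, w X ≤ ∑ T, μ T * ∑ X ∈ (S \ T).powerset, w X := by
  rw [sum_mul_sum_powerset_sdiff, Finset.mul_sum]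
  refine Finset.sum_le_sum fun X _ => ?_
  rcases (hw0 X).eq_or_lt with hw | hw
  · simp [← hw]
  have hcard : (X.card : ℝ) ≤ k := by
    exact_mod_cast not_lt.mp fun hk => hw.ne' (hwk X hk)
  calc (1 - k * p) * w X ≤ (1 - X.card * p) * w X := by gcongr
    _ ≤ (∑ T, if Disjoint X T then μ T else 0) * w X :=
        mul_le_mul_of_nonneg_right (one_sub_card_mul_le_sum_disjoint μ hμ0 hμ1 hp X) hw.le
    _ = _ := mul_comm _ _

theorem IsMPH.mul_le_sum_mul_sdiff {k : ℕ} {v : Finset ι → ℝ} (hv : IsMPH k v)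
    (hμ0 : ∀ T, 0 ≤ μ T) (hμ1 : ∑ T, μ T = 1) {p : ℝ} (hp0 : 0 ≤ p)
    (hp : ∀ j, ∑ T, (if j ∈ T then μ T else 0) ≤ p) (S : Finset ι) :
    (1 - k * p) * v S ≤ ∑ T, μ T * v (S \ T) := by
  obtain ⟨t, -, w, hw0, hwk, hmax, hle⟩ := hv
  obtain ⟨ℓ, hℓ⟩ := hmax S
  rw [hℓ]
  calc (1 - k * p) * ∑ X ∈ S.powerset, w ℓ X
      ≤ ∑ T, μ T * ∑ X ∈ (S \ T).powerset, w ℓ X :=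
        mul_sum_powerset_le_sum_mul_sum_powerset_sdiff μ hμ0 hμ1 hp0 hp (w ℓ) (hw0 ℓ)
          (hwk ℓ) S
    _ ≤ ∑ T, μ T * v (S \ T) :=
        Finset.sum_le_sum fun T _ => mul_le_mul_of_nonneg_left (hle (S \ T) ℓ) (hμ0 T)

end

theorem stmt_14 {ι : Type*} [Fintype ι] [DecidableEq ι]
    (μ : Finset ι → ℝ) (hμ0 : ∀ T, 0 ≤ μ T) (hμ1 : ∑ T : Finset ι, μ T = 1)
    (k : ℕ) (hk : 2 ≤ k)
    (h : ∀ j : ι, (∑ T : Finset ι, if j ∈ T then μ T else 0) ≤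
      (1 / (2 * ((k : ℝ) - 1))) / (1 + 1 / (2 * ((k : ℝ) - 1))))
    (v : Finset ι → ℝ) (hv : IsMPH k v) (S : Finset ι) :
    (1 / (2 * ((k : ℝ) - 1))) * (∑ T : Finset ι, μ T * v (S \ T)) ≥
      (1 / (4 * (k : ℝ) - 2)) * v S := by
  set β : ℝ := 1 / (2 * ((k : ℝ) - 1))
  have hk1 : (1 : ℝ) ≤ k - 1 := by
    have : (2 : ℝ) ≤ k := by exact_mod_cast hk
    linarith
  have hβ : 0 < β := by positivity
  have h4k : (4 * (k : ℝ) - 2) ≠ 0 := by linarith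
  have hconst : 1 / (4 * (k : ℝ) - 2) = β * (1 - k * (β / (1 + β))) := by
    simp only [β]
    field_simp
    ring
  rw [ge_iff_le, hconst, mul_assoc]
  exact mul_le_mul_of_nonneg_left
    (hv.mul_le_sum_mul_sdiff μ hμ0 hμ1 (by positivity) h S) hβ.le
end
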